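/- Let n ≥ 1, let x : Fin n → ℤ, let ω be an integer, and suppose there exists a sign assignment ε : Fin n → ℤ with ε(i) ∈ {1, −1} for every i, with ε(j) = 1 for at least one index j, and with ∑_{i} ε(i) · x(i) = ω. Then the singleton multiset {exp(ω)} is reachable from the multiset {exp(x(0)), …, exp(x(n−1))} by a sequence of n − 1 multiplicative Countdown steps (steps using only × and ÷). -/
import Mathlib


/-- A multiplicative Countdown step: remove two elements `x, y` (occupying
distinct positions) from the multiset and insert `x * y` or `x / y`,
division only by a nonzero number. -/
def MulCountdownStep (s t : Multiset ℝ) : Prop :=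
  ∃ (u : Multiset ℝ) (x y r : ℝ), s = x ::ₘ y ::ₘ u ∧ t = r ::ₘ u ∧
    (r = x * y ∨ (y ≠ 0 ∧ r = x / y))

/-- `MulCountdownStepN m s t` holds iff `t` is obtained from `s` by exactly
`m` multiplicative Countdown steps. -/
def MulCountdownStepN : ℕ → Multiset ℝ → Multiset ℝ → Prop
  | 0 => fun s t => t = s
  | m + 1 => fun s t => ∃ u, MulCountdownStep s u ∧ MulCountdownStepN m u t

theorem mul_countdown_aux (m : Multiset (ℤ × ℤ)) : ∀ a : ℤ,
    (∀ p ∈ m, p.1 = 1 ∨ p.1 = -1) →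
    MulCountdownStepN m.card
      (Multiset.map (fun p => Real.exp ((p.2 : ℤ) : ℝ)) ((1, a) ::ₘ m))
      {Real.exp (((a + (m.map (fun p => p.1 * p.2)).sum : ℤ) : ℝ))} := by
  induction m using Multiset.induction with
  | empty =>
    intro a _
    simp [MulCountdownStepN]
  | cons p m ih =>
    intro a hsigns
    rw [Multiset.card_cons]
    refine ⟨Multiset.map (fun p => Real.exp ((p.2 : ℤ) : ℝ)) ((1, a + p.1 * p.2) ::ₘ m),
      ?_, ?_⟩
    · refine ⟨Multiset.map (fun p => Real.exp ((p.2 : ℤ) : ℝ)) m,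
        Real.exp (a : ℝ), Real.exp ((p.2 : ℤ) : ℝ),
        Real.exp (((a + p.1 * p.2 : ℤ) : ℝ)), by simp, by simp, ?_⟩
      rcases hsigns p (Multiset.mem_cons_self _ _) with h1 | h1
      · left
        rw [h1]
        push_cast
        rw [one_mul, Real.exp_add]
      · right
        refine ⟨Real.exp_ne_zero _, ?_⟩
        rw [h1]
        push_cast
        rw [neg_one_mul, ← sub_eq_add_neg, Real.exp_sub]
    · have := ih (a + p.1 * p.2) (fun q hq => hsigns q (Multiset.mem_cons_of_mem hq))
      have heq : a + ((p ::ₘ m).map (fun q => q.1 * q.2)).sum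
          = a + p.1 * p.2 + (m.map (fun q => q.1 * q.2)).sum := by
        rw [Multiset.map_cons, Multiset.sum_cons]; ring
      rw [heq]
      exact this

theorem signs_to_mul_countdown_reach (n : ℕ) (hn : 1 ≤ n)
    (x : Fin n → ℤ) (ω : ℤ)
    (h : ∃ ε : Fin n → ℤ, (∀ i, ε i = 1 ∨ ε i = -1) ∧ (∃ j, ε j = 1) ∧
      ∑ i, ε i * x i = ω) :
    MulCountdownStepN (n - 1)
      (Multiset.map (fun i => Real.exp ((x i : ℤ) : ℝ)) Finset.univ.val)
      {Real.exp ((ω : ℤ) : ℝ)} := by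
  obtain ⟨ε, hsigns, ⟨j, hj⟩, hsum⟩ := h
  have hjmem : j ∈ (Finset.univ : Finset (Fin n)).val := Finset.mem_univ j
  have hje : (Finset.univ : Finset (Fin n)).val
      = j ::ₘ (Finset.univ : Finset (Fin n)).val.erase j :=
    (Multiset.cons_erase hjmem).symm
  set e := (Finset.univ : Finset (Fin n)).val.erase j with he
  set m := e.map (fun i => (ε i, x i)) with hm
  have hsignsm : ∀ p ∈ m, p.1 = 1 ∨ p.1 = -1 := by
    intro p hp
    obtain ⟨i, _, rfl⟩ := Multiset.mem_map.mp hp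
    exact hsigns i
  have hcard : m.card = n - 1 := by
    rw [hm, Multiset.card_map, he, Multiset.card_erase_of_mem hjmem]
    simp [Nat.pred_eq_sub_one]
  have hω : x j + (m.map (fun p => p.1 * p.2)).sum = ω := by
    rw [← hsum]
    have : ∑ i, ε i * x i
        = ((Finset.univ : Finset (Fin n)).val.map (fun i => ε i * x i)).sum := rfl
    rw [this, hje]
    rw [Multiset.map_cons, Multiset.sum_cons, hj, one_mul]
    congr 1
    rw [hm, Multiset.map_map]
    rfl
  have hmap : Multiset.map (fun i => Real.exp ((x i : ℤ) : ℝ))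
      (Finset.univ : Finset (Fin n)).val
      = Multiset.map (fun p => Real.exp ((p.2 : ℤ) : ℝ)) ((1, x j) ::ₘ m) := by
    rw [hje, Multiset.map_cons, Multiset.map_cons, hm, Multiset.map_map]
    rfl
  have := mul_countdown_aux m (x j) hsignsm
  rw [hcard, hω] at this
  rw [hmap]
  exact this
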